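/- For x ≥ 2, ∑_{p ≤ x, p prime} 1/p = log log x + b + O(1/log x) for some absolute constant b. -/

import Mathlib

/-!
Write `R(x) = ∑_{p ≤ x} log p / p`. Inserting Legendre's bounds `n / p - 1 ≤ v_p(n!) ≤ n / (p - 1)`
into `log n! = ∑_{p ≤ n} v_p(n!) log p`, and using Chebyshev's bound `θ(n) ≤ n log 4` and
`log n! = n log n + O(n)`, gives Mertens' first theorem: `E(x) = R(x) - log x` is bounded.
Abel summation against `1 / log t` then gives
`∑_{p ≤ x} 1/p = R(x) / log x + ∫_2^x R(t) / (t log² t) dt`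
`            = 1 + E(x) / log x + log log x - log log 2 + ∫_2^x E(t) / (t log² t) dt`,
and as `∫_x^∞ dt / (t log² t) = 1 / log x`, the last integral converges, with a tail of size
`O(1 / log x)`.
-/

open Nat hiding log
open Finset Real MeasureTheory Set Filter

theorem div_le_padicValNat_factorial {p : ℕ} [Fact p.Prime] (n : ℕ) :
    n / p ≤ padicValNat p n ! := by
  rw [← padicValNat_mul_div_factorial, padicValNat_factorial_mul]
  exact Nat.le_add_left _ _

theorem sub_one_mul_padicValNat_factorial_le {p : ℕ} [Fact p.Prime] (n : ℕ) :
    (p - 1) * padicValNat p n ! ≤ n := by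
  rw [sub_one_mul_padicValNat_factorial]
  exact Nat.sub_le _ _

theorem div_sub_one_le_padicValNat_factorial {p : ℕ} [hp : Fact p.Prime] (n : ℕ) :
    (n : ℝ) / p - 1 ≤ padicValNat p n ! := by
  have hfloor : (n : ℝ) / p - 1 ≤ ((n / p : ℕ) : ℝ) := by
    have := Nat.lt_div_mul_add (a := n) hp.out.pos
    rw [sub_le_iff_le_add, div_le_iff₀ (by exact_mod_cast hp.out.pos), add_mul, one_mul]
    exact_mod_cast this.le
  exact hfloor.trans (mod_cast div_le_padicValNat_factorial n)

theorem padicValNat_factorial_le_div_add {p : ℕ} [hp : Fact p.Prime] (n : ℕ) :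
    (padicValNat p n ! : ℝ) ≤ n / p + 2 * n / p ^ 2 := by
  have hp2 : (2 : ℝ) ≤ p := by exact_mod_cast hp.out.two_le
  have hv : ((p : ℝ) - 1) * padicValNat p n ! ≤ n := by
    have := sub_one_mul_padicValNat_factorial_le (p := p) n
    rw [← Nat.cast_le (α := ℝ), Nat.cast_mul, Nat.cast_sub hp.out.one_le] at this
    simpa using this
  calc (padicValNat p n ! : ℝ) ≤ n / (p - 1) := by
        rw [le_div_iff₀ (by linarith)]; linarith
    _ ≤ n / p + 2 * n / p ^ 2 := by
        rw [div_add_div _ _ (by positivity) (by positivity), div_le_div_iff₀ (by linarith)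
          (by positivity)]
        have : (0 : ℝ) ≤ n := n.cast_nonneg
        nlinarith [mul_nonneg this (sub_nonneg.mpr hp2)]

theorem log_factorial_eq_sum_primesLE (n : ℕ) :
    log n ! = ∑ p ∈ primesLE n, padicValNat p n ! * log p := by
  rw [log_nat_eq_sum_factorization, Finsupp.sum_of_support_subset _ (s := primesLE n)]
  · refine sum_congr rfl fun p hp => ?_
    rw [factorization_def _ (mem_primesLE.mp hp).2]
  · intro p hp
    have hp' := Nat.prime_of_mem_primeFactors hp
    exact mem_primesLE.mpr ⟨(hp'.dvd_factorial).mp (Nat.dvd_of_mem_primeFactors hp), hp'⟩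
  · simp

theorem log_factorial_le (n : ℕ) : log n ! ≤ n * log n := by
  rcases n.eq_zero_or_pos with rfl | hn
  · simp
  rw [← Real.log_pow]
  exact log_le_log (by positivity) (mod_cast n.factorial_le_pow)

theorem mul_log_sub_le_log_factorial (n : ℕ) : n * log n - n ≤ log n ! := by
  rcases n.eq_zero_or_pos with rfl | hn
  · simp
  have := Stirling.le_log_factorial_stirling hn.ne'
  have : 0 ≤ log n := log_natCast_nonneg n
  have : 0 ≤ log (2 * π) := log_nonneg (by linarith [pi_gt_three])
  linarith

theorem summable_log_div_sq : Summable fun n : ℕ => log n / n ^ 2 := by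
  refine ((summable_nat_rpow_inv.mpr (by norm_num : (1:ℝ) < 3 / 2)).mul_left 2).of_nonneg_of_le
    (fun n => by positivity) fun n => ?_
  rcases n.eq_zero_or_pos with rfl | hn
  · simp
  have hn' : (0:ℝ) < n := by exact_mod_cast hn
  calc log n / n ^ 2 ≤ ((n : ℝ) ^ (1 / 2 : ℝ) / (1 / 2)) / n ^ 2 := by
        gcongr; exact log_le_rpow_div hn'.le (by norm_num)
    _ = 2 * ((n : ℝ) ^ (3 / 2 : ℝ))⁻¹ := by
        rw [show (3 / 2 : ℝ) = 2 - 1 / 2 by norm_num, rpow_sub hn', rpow_two]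
        field_simp

open Chebyshev in
theorem mul_sum_primesLE_log_div_sub_le_log_factorial (n : ℕ) :
    n * ∑ p ∈ primesLE n, log p / p - log 4 * n ≤ log n ! := by
  have hθ : ∑ p ∈ primesLE n, log p ≤ log 4 * n := by
    rw [← theta_eq_sum_primesLE_log]; exact theta_le_log4_mul_x n.cast_nonneg
  calc n * ∑ p ∈ primesLE n, log p / p - log 4 * n
      ≤ ∑ p ∈ primesLE n, ((n : ℝ) / p - 1) * log p := by
        simp only [mul_sum, sub_one_mul, sum_sub_distrib, mul_div_assoc', div_mul_eq_mul_div]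
        linarith
    _ ≤ log n ! := by
        rw [log_factorial_eq_sum_primesLE]
        gcongr with p hp
        have := Fact.mk (mem_primesLE.mp hp).2
        exact div_sub_one_le_padicValNat_factorial n

theorem log_factorial_le_mul_sum_primesLE_log_div_add (n : ℕ) :
    log n ! ≤ n * ∑ p ∈ primesLE n, log p / p + 2 * n * ∑' m : ℕ, log m / m ^ 2 := by
  have hK : ∑ p ∈ primesLE n, log p / p ^ 2 ≤ ∑' m : ℕ, log m / m ^ 2 :=
    summable_log_div_sq.sum_le_tsum _ fun m _ => by positivity
  calc log n ! ≤ ∑ p ∈ primesLE n, ((n : ℝ) / p + 2 * n / p ^ 2) * log p := by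
        rw [log_factorial_eq_sum_primesLE]
        gcongr with p hp
        have := Fact.mk (mem_primesLE.mp hp).2
        exact padicValNat_factorial_le_div_add n
    _ = n * ∑ p ∈ primesLE n, log p / p + 2 * n * ∑ p ∈ primesLE n, log p / p ^ 2 := by
        simp only [mul_sum, ← sum_add_distrib]
        refine sum_congr rfl fun p _ => by ring
    _ ≤ _ := by gcongr

theorem exists_abs_sum_primesLE_log_div_sub_log_le :
    ∃ C, ∀ n : ℕ, |∑ p ∈ primesLE n, log p / p - log n| ≤ C := by
  have hK : 0 ≤ ∑' m : ℕ, log m / m ^ 2 := tsum_nonneg fun m => by positivity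
  refine ⟨log 4 + 1 + 2 * ∑' m : ℕ, log m / m ^ 2, fun n => ?_⟩
  rcases n.eq_zero_or_pos with rfl | hn
  · simp only [primesLE_zero, sum_empty, CharP.cast_eq_zero, log_zero, sub_zero, abs_zero]
    positivity
  have hn : (0 : ℝ) < n := by exact_mod_cast hn
  have hlow := mul_sum_primesLE_log_div_sub_le_log_factorial n
  have hup := log_factorial_le_mul_sum_primesLE_log_div_add n
  have := log_factorial_le n
  have := mul_log_sub_le_log_factorial n
  have := mul_nonneg hn.le hK
  have := mul_nonneg hn.le (log_nonneg (by norm_num : (1 : ℝ) ≤ 4))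
  rw [abs_le]
  constructor <;> refine le_of_mul_le_mul_left ?_ hn <;> linarith

noncomputable def primeLogDivSum (x : ℝ) : ℝ := ∑ p ∈ primesLE ⌊x⌋₊, log p / p

noncomputable def mertensRemainder (x : ℝ) : ℝ := primeLogDivSum x - log x

theorem primeLogDivSum_mono : Monotone primeLogDivSum := fun _ _ hxy =>
  sum_le_sum_of_subset_of_nonneg (primesLE_mono (floor_le_floor hxy)) fun _ _ _ => by positivity

theorem measurable_mertensRemainder : Measurable mertensRemainder :=
  primeLogDivSum_mono.measurable.sub measurable_log

theorem exists_abs_mertensRemainder_le :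
    ∃ C, ∀ x : ℝ, 1 ≤ x → |mertensRemainder x| ≤ C := by
  obtain ⟨C, hC⟩ := exists_abs_sum_primesLE_log_div_sub_log_le
  refine ⟨C + log 2, fun x hx => ?_⟩
  have hn : (1 : ℝ) ≤ ⌊x⌋₊ := mod_cast (one_le_floor_iff x).mpr hx
  have hlow : log ⌊x⌋₊ ≤ log x := log_le_log (by linarith) (floor_le (by linarith))
  have hup : log x ≤ log 2 + log ⌊x⌋₊ := by
    rw [← log_mul two_ne_zero (by positivity)]
    exact log_le_log (by linarith) (by linarith [lt_floor_add_one x])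
  have := abs_le.mp (hC ⌊x⌋₊)
  rw [mertensRemainder, primeLogDivSum, abs_le]
  constructor <;> linarith

theorem primeLogDivSum_eq_sum_Icc_indicator (x : ℝ) :
    primeLogDivSum x =
      ∑ k ∈ Icc 0 ⌊x⌋₊, {p | p.Prime}.indicator (fun n : ℕ => log n / n) k := by
  simp [primeLogDivSum, primesLE_eq_filter_range, sum_filter, range_succ_eq_Icc_zero,
    Set.indicator_apply]

theorem sum_primesLE_one_div_eq_div_log_add_integral {x : ℝ} (hx : 2 ≤ x) :
    ∑ p ∈ primesLE ⌊x⌋₊, (1 : ℝ) / p =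
      primeLogDivSum x / log x + ∫ t in 2..x, primeLogDivSum t * (t⁻¹ / log t ^ 2) := by
  let a : ℕ → ℝ := {p | p.Prime}.indicator fun n => log n / n
  have hsum :
      ∑ p ∈ primesLE ⌊x⌋₊, (1 : ℝ) / p = ∑ k ∈ Icc 0 ⌊x⌋₊, (log k)⁻¹ * a k := by
    rw [primesLE_eq_filter_range, sum_filter, range_succ_eq_Icc_zero]
    refine sum_congr rfl fun k _ => ?_
    split_ifs with h
    · have : log k ≠ 0 := log_ne_zero_of_pos_of_ne_one (mod_cast h.pos) (mod_cast h.ne_one)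
      simp [a, h, field]
    · simp [a, h]
  rw [hsum, sum_mul_eq_sub_integral_mul₁ a (f := fun t => (log t)⁻¹) (by simp [a])
    (by simp [a]), ← intervalIntegral.integral_of_le hx]
  · simp only [a, ← primeLogDivSum_eq_sum_Icc_indicator, deriv_inv_log_apply]
    rw [sub_eq_add_neg, ← intervalIntegral.integral_neg, div_eq_inv_mul]
    congr 1
    refine intervalIntegral.integral_congr fun t _ => ?_
    ring
  · intro t ⟨ht, _⟩
    exact differentiableAt_inv_log (by linarith) (by linarith) (by linarith)
  · refine ContinuousOn.integrableOn_Icc fun t ⟨ht, _⟩ => ContinuousWithinAt.congr ?_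
      (fun _ _ => deriv_inv_log_apply) deriv_inv_log_apply
    have : t ≠ 0 := by linarith
    have : log t ≠ 0 := log_ne_zero_of_pos_of_ne_one (by linarith) (by linarith)
    exact ContinuousAt.continuousWithinAt (by fun_prop (disch := positivity))

theorem integral_mul_inv_div_log_sq_eq {f : ℝ → ℝ} {a b : ℝ} (ha : 1 < a) (hb : 1 < b)
    (hf : IntervalIntegrable (fun t => (f t - log t) * (t⁻¹ / log t ^ 2)) volume a b) :
    ∫ t in a..b, f t * (t⁻¹ / log t ^ 2) =
      log (log b) - log (log a) + ∫ t in a..b, (f t - log t) * (t⁻¹ / log t ^ 2) := by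
  have hlog : IntervalIntegrable (fun t => t⁻¹ / log t) volume a b := by
    refine ContinuousOn.intervalIntegrable fun t ht => ?_
    have : 1 < t := by grind [Set.uIcc]
    have : log t ≠ 0 := (log_pos this).ne'
    exact ContinuousAt.continuousWithinAt (by fun_prop (disch := grind))
  rw [← integral_inv_div_log ha hb, ← intervalIntegral.integral_add hlog hf]
  refine intervalIntegral.integral_congr fun t _ => ?_
  rcases eq_or_ne (log t) 0 with h | h
  · simp [h]
  · field_simp
    ring

section BoundedNumerator

variable {f : ℝ → ℝ} {a C : ℝ}

theorem integrableOn_Ioi_mul_inv_div_log_sq (ha : 1 < a) (hf : AEStronglyMeasurable f)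
    (hC : ∀ t ∈ Ioi a, |f t| ≤ C) :
    IntegrableOn (fun t => f t * (t⁻¹ / log t ^ 2)) (Ioi a) :=
  (integrableOn_inv_div_log_sq_Ioi ha).bdd_mul hf.restrict
    ((ae_restrict_iff' measurableSet_Ioi).mpr (Eventually.of_forall hC))

theorem abs_integral_Ioi_mul_inv_div_log_sq_le (ha : 1 < a) (hC : ∀ t ∈ Ioi a, |f t| ≤ C) :
    |∫ t in Ioi a, f t * (t⁻¹ / log t ^ 2)| ≤ C / log a := by
  have hbound : ∀ t ∈ Ioi a, ‖f t * (t⁻¹ / log t ^ 2)‖ ≤ C * (t⁻¹ / log t ^ 2) := by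
    intro t ht
    have : 0 ≤ t⁻¹ / log t ^ 2 :=
      div_nonneg (inv_nonneg.mpr (by linarith [mem_Ioi.mp ht])) (sq_nonneg _)
    rw [norm_mul, Real.norm_of_nonneg this]
    exact mul_le_mul_of_nonneg_right (hC t ht) this
  calc |∫ t in Ioi a, f t * (t⁻¹ / log t ^ 2)|
      ≤ ∫ t in Ioi a, C * (t⁻¹ / log t ^ 2) :=
        norm_integral_le_of_norm_le ((integrableOn_inv_div_log_sq_Ioi ha).const_mul C)
          ((ae_restrict_iff' measurableSet_Ioi).mpr (Eventually.of_forall hbound))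
    _ = C / log a := by rw [integral_const_mul, integral_inv_div_log_sq_Ioi ha, div_eq_mul_inv]

end BoundedNumerator

theorem integrableOn_Ioi_mertensRemainder_mul_inv_div_log_sq :
    IntegrableOn (fun t => mertensRemainder t * (t⁻¹ / log t ^ 2)) (Ioi 2) := by
  obtain ⟨C, hC⟩ := exists_abs_mertensRemainder_le
  exact integrableOn_Ioi_mul_inv_div_log_sq one_lt_two
    measurable_mertensRemainder.aestronglyMeasurable fun t ht => hC t (by linarith [mem_Ioi.mp ht])

noncomputable def mertensConstant : ℝ :=
  1 - log (log 2) + ∫ t in Ioi 2, mertensRemainder t * (t⁻¹ / log t ^ 2)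

theorem sum_primesLE_one_div_sub_log_log_sub_mertensConstant {x : ℝ} (hx : 2 ≤ x) :
    ∑ p ∈ primesLE ⌊x⌋₊, (1 : ℝ) / p - log (log x) - mertensConstant =
      mertensRemainder x / log x - ∫ t in Ioi x, mertensRemainder t * (t⁻¹ / log t ^ 2) := by
  have hint := integrableOn_Ioi_mertensRemainder_mul_inv_div_log_sq
  have hlogx : log x ≠ 0 := (log_pos (by linarith)).ne'
  have hsplit := intervalIntegral.integral_Ioi_sub_Ioi hint hx
  simp only [mertensConstant, mertensRemainder] at hint hsplit ⊢
  rw [sum_primesLE_one_div_eq_div_log_add_integral hx,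
    integral_mul_inv_div_log_sq_eq one_lt_two (by linarith)
      ((intervalIntegrable_iff_integrableOn_Ioc_of_le hx).mpr (hint.mono_set Ioc_subset_Ioi_self)),
    ← hsplit, sub_div, div_self hlogx]
  ring

/-- Mertens' second theorem: `∑_{p ≤ x} 1/p = log log x + b + O(1/log x)` for `x ≥ 2`. -/
theorem mertens_second :
    ∃ b C : ℝ, ∀ x : ℝ, 2 ≤ x →
      |(∑ p ∈ (Finset.range (⌊x⌋₊ + 1)).filter Nat.Prime, (1 : ℝ) / p) -
          Real.log (Real.log x) - b| ≤ C / Real.log x := by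
  obtain ⟨C, hC⟩ := exists_abs_mertensRemainder_le
  refine ⟨mertensConstant, 2 * C, fun x hx => ?_⟩
  have hx1 : 1 < x := by linarith
  rw [← primesLE_eq_filter_range, sum_primesLE_one_div_sub_log_log_sub_mertensConstant hx]
  calc _ ≤ |mertensRemainder x / log x| +
        |∫ t in Ioi x, mertensRemainder t * (t⁻¹ / log t ^ 2)| := abs_sub _ _
    _ ≤ C / log x + C / log x := by
        gcongr
        · rw [abs_div, abs_of_pos (log_pos hx1)]
          exact div_le_div_of_nonneg_right (hC x hx1.le) (log_pos hx1).le
        · exact abs_integral_Ioi_mul_inv_div_log_sq_le hx1 fun t ht =>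
            hC t (by linarith [mem_Ioi.mp ht])
    _ = 2 * C / log x := by ring
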